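/- arXiv:2208.07458 — 7 statements merged into one kernel-verified Lean document; each statement's English description precedes it below -/
import Mathlib

section
/- Let Λ be an n×n real diagonal matrix with diagonal entries λ_i ∈ [0,1], and let 0 = t₀ < t₁ < ⋯ < t_J be natural numbers. Then for every vector y ∈ ℝⁿ, ‖Λ^(t_J) y‖² + Σ_{j=0}^{J-1} ‖(Λ^(t_j) − Λ^(t_{j+1})) y‖² ≤ ‖y‖², where ‖·‖ is the Euclidean norm. -/
/-! Each step contributes `(a - b)² ≤ a² - b²` when `0 ≤ b ≤ a`, so for a nonincreasing nonnegative
sequence the squared increments telescope against `x 0 ²`. For the diagonal matrix this applies to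
every coordinate with `x j = λᵢ ^ t j`, which is nonincreasing because `λᵢ ∈ [0, 1]`. -/

lemma sq_sub_le_sq_sub_sq {a b : ℝ} (hb : 0 ≤ b) (hba : b ≤ a) : (a - b) ^ 2 ≤ a ^ 2 - b ^ 2 := by
  nlinarith [mul_nonneg hb (sub_nonneg.mpr hba)]

lemma sq_add_sum_sq_sub_le_of_antitone (x : ℕ → ℝ) (J : ℕ)
    (hx : ∀ j < J, 0 ≤ x (j + 1) ∧ x (j + 1) ≤ x j) :
    x J ^ 2 + ∑ j ∈ Finset.range J, (x j - x (j + 1)) ^ 2 ≤ x 0 ^ 2 := by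
  have hsum : ∑ j ∈ Finset.range J, (x j - x (j + 1)) ^ 2
      ≤ ∑ j ∈ Finset.range J, (x j ^ 2 - x (j + 1) ^ 2) :=
    Finset.sum_le_sum fun j hj ↦
      sq_sub_le_sq_sub_sq (hx j (Finset.mem_range.mp hj)).1 (hx j (Finset.mem_range.mp hj)).2
  rw [Finset.sum_range_sub' (fun j ↦ x j ^ 2)] at hsum
  linarith

lemma pow_sq_add_sum_pow_sub_sq_le_one {a : ℝ} (ha : a ∈ Set.Icc (0 : ℝ) 1) (J : ℕ) (t : ℕ → ℕ)
    (ht0 : t 0 = 0) (hmono : ∀ j < J, t j ≤ t (j + 1)) :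
    (a ^ t J) ^ 2 + ∑ j ∈ Finset.range J, (a ^ t j - a ^ t (j + 1)) ^ 2 ≤ 1 := by
  simpa [ht0] using sq_add_sum_sq_sub_le_of_antitone (fun j ↦ a ^ t j) J fun j hj ↦
    ⟨pow_nonneg ha.1 _, pow_le_pow_of_le_one ha.1 ha.2 (hmono j hj)⟩

lemma Matrix.diagonal_pow_sub_diagonal_pow_mulVec {n R : Type*} [Fintype n] [DecidableEq n]
    [CommRing R] (d y : n → R) (k l : ℕ) (i : n) :
    ((Matrix.diagonal d ^ k - Matrix.diagonal d ^ l).mulVec y) i = (d i ^ k - d i ^ l) * y i := by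
  simp [Matrix.diagonal_pow, Matrix.mulVec_diagonal, sub_mul]

open Matrix in
theorem stmt3 (n : ℕ) (d : Fin n → ℝ) (hd : ∀ i, d i ∈ Set.Icc (0 : ℝ) 1)
    (J : ℕ) (t : ℕ → ℕ) (ht0 : t 0 = 0) (hmono : ∀ j < J, t j < t (j + 1))
    (y : Fin n → ℝ) :
    (∑ i, (((Matrix.diagonal d ^ t J).mulVec y) i) ^ 2) +
      ∑ j ∈ Finset.range J,
        ∑ i, (((Matrix.diagonal d ^ t j - Matrix.diagonal d ^ t (j + 1)).mulVec y) i) ^ 2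
      ≤ ∑ i, (y i) ^ 2 := by
  simp only [diagonal_pow_sub_diagonal_pow_mulVec]
  simp only [diagonal_pow, mulVec_diagonal, Pi.pow_apply]
  rw [Finset.sum_comm, ← Finset.sum_add_distrib]
  refine Finset.sum_le_sum fun i _ ↦ ?_
  have hscalar := pow_sq_add_sum_pow_sub_sq_le_one (hd i) J t ht0 fun j hj ↦ (hmono j hj).le
  calc (d i ^ t J * y i) ^ 2 + ∑ j ∈ Finset.range J, ((d i ^ t j - d i ^ t (j + 1)) * y i) ^ 2
      = ((d i ^ t J) ^ 2 + ∑ j ∈ Finset.range J, (d i ^ t j - d i ^ t (j + 1)) ^ 2) * y i ^ 2 := by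
        simp only [mul_pow, add_mul, Finset.sum_mul]
    _ ≤ y i ^ 2 := mul_le_of_le_one_left (sq_nonneg _) hscalar
end

section
/- Let Λ be an n×n real diagonal matrix with diagonal entries λ_i ∈ [0,1], let 0 = t₀ < t₁ < ⋯ < t_J be natural numbers, and let C := min over ξ ∈ [0,1] of (ξ^(2t_J) + (1 − ξ^(t₁))²). Then for every vector y ∈ ℝⁿ, ‖Λ^(t_J) y‖² + Σ_{j=0}^{J-1} ‖(Λ^(t_j) − Λ^(t_{j+1})) y‖² ≥ C ‖y‖². -/
/-!
In the eigenbasis of `Λ` the quadratic form on the right splits into `∑ᵢ φ(λᵢ) yᵢ²`, where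
`φ(ξ) = ξ^(2 t_J) + ∑ⱼ (ξ^(t_j) - ξ^(t_{j+1}))²`. Since `t₀ = 0`, the first term of the sum is
`(1 - ξ^(t₁))²`, so `φ(ξ)` dominates the function minimised in `C`; for `J = 0` one has `φ = 1`,
which is that function's value at `ξ = 1`.
-/

open Finset Matrix

noncomputable def spectralFactor (t : ℕ → ℕ) (J : ℕ) (ξ : ℝ) : ℝ :=
  ξ ^ (2 * t J) + ∑ j ∈ range J, (ξ ^ t j - ξ ^ t (j + 1)) ^ 2

lemma sInf_le_spectralFactor {t : ℕ → ℕ} (ht0 : t 0 = 0) (J : ℕ) {ξ : ℝ}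
    (hξ : ξ ∈ Set.Icc (0 : ℝ) 1) :
    sInf ((fun ξ : ℝ => ξ ^ (2 * t J) + (1 - ξ ^ t 1) ^ 2) '' Set.Icc (0 : ℝ) 1) ≤
      spectralFactor t J ξ := by
  have hbdd : BddBelow ((fun ξ : ℝ => ξ ^ (2 * t J) + (1 - ξ ^ t 1) ^ 2) '' Set.Icc (0 : ℝ) 1) :=
    ⟨0, by rintro _ ⟨x, hx, rfl⟩; have := pow_nonneg hx.1 (2 * t J); positivity⟩
  rcases Nat.eq_zero_or_pos J with rfl | hJ
  · calc _ ≤ (1 : ℝ) ^ (2 * t 0) + (1 - (1 : ℝ) ^ t 1) ^ 2 :=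
          csInf_le hbdd ⟨1, ⟨zero_le_one, le_rfl⟩, rfl⟩
      _ = spectralFactor t 0 ξ := by simp [spectralFactor, ht0]
  · have hfirst : (1 - ξ ^ t 1) ^ 2 ≤ ∑ j ∈ range J, (ξ ^ t j - ξ ^ t (j + 1)) ^ 2 := by
      simpa [ht0] using single_le_sum (f := fun j => (ξ ^ t j - ξ ^ t (j + 1)) ^ 2)
        (fun j _ => sq_nonneg _) (mem_range.mpr hJ)
    calc _ ≤ ξ ^ (2 * t J) + (1 - ξ ^ t 1) ^ 2 := csInf_le hbdd ⟨ξ, hξ, rfl⟩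
      _ ≤ spectralFactor t J ξ := add_le_add_right hfirst _

lemma diagonal_pow_mulVec_apply {n : Type*} [Fintype n] [DecidableEq n] (d y : n → ℝ)
    (k : ℕ) (i : n) : (diagonal d ^ k *ᵥ y) i = d i ^ k * y i := by
  rw [diagonal_pow, mulVec_diagonal, Pi.pow_apply]

lemma sum_sq_diagonal_pow_mulVec_eq {n : Type*} [Fintype n] [DecidableEq n] (d y : n → ℝ)
    (J : ℕ) (t : ℕ → ℕ) :
    (∑ i, ((diagonal d ^ t J) *ᵥ y) i ^ 2) +
        ∑ j ∈ range J, ∑ i, ((diagonal d ^ t j - diagonal d ^ t (j + 1)) *ᵥ y) i ^ 2 =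
      ∑ i, spectralFactor t J (d i) * y i ^ 2 := by
  simp only [sub_mulVec, Pi.sub_apply, diagonal_pow_mulVec_apply, spectralFactor, add_mul,
    sum_mul, sum_add_distrib]
  rw [sum_comm]
  congr 1 <;> refine sum_congr rfl fun _ _ => ?_
  · ring
  · exact sum_congr rfl fun _ _ => by ring

open Matrix in
theorem stmt4_general (n : ℕ) (d : Fin n → ℝ) (hd : ∀ i, d i ∈ Set.Icc (0 : ℝ) 1)
    (J : ℕ) (t : ℕ → ℕ) (ht0 : t 0 = 0)
    (C : ℝ)
    (hC : C = sInf ((fun ξ : ℝ => ξ ^ (2 * t J) + (1 - ξ ^ t 1) ^ 2) '' Set.Icc (0 : ℝ) 1))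
    (y : Fin n → ℝ) :
    C * ∑ i, (y i) ^ 2 ≤
      (∑ i, (((Matrix.diagonal d ^ t J).mulVec y) i) ^ 2) +
      ∑ j ∈ Finset.range J,
        ∑ i, (((Matrix.diagonal d ^ t j - Matrix.diagonal d ^ t (j + 1)).mulVec y) i) ^ 2 := by
  rw [sum_sq_diagonal_pow_mulVec_eq, mul_sum]
  refine sum_le_sum fun i _ => mul_le_mul_of_nonneg_right ?_ (sq_nonneg _)
  exact hC ▸ sInf_le_spectralFactor ht0 J (hd i)

open Matrix in
theorem stmt4 (n : ℕ) (d : Fin n → ℝ) (hd : ∀ i, d i ∈ Set.Icc (0 : ℝ) 1)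
    (J : ℕ) (t : ℕ → ℕ) (ht0 : t 0 = 0) (hmono : ∀ j < J, t j < t (j + 1))
    (C : ℝ)
    (hC : C = sInf ((fun ξ : ℝ => ξ ^ (2 * t J) + (1 - ξ ^ t 1) ^ 2) '' Set.Icc (0 : ℝ) 1))
    (y : Fin n → ℝ) :
    C * ∑ i, (y i) ^ 2 ≤
      (∑ i, (((Matrix.diagonal d ^ t J).mulVec y) i) ^ 2) +
      ∑ j ∈ Finset.range J,
        ∑ i, (((Matrix.diagonal d ^ t j - Matrix.diagonal d ^ t (j + 1)).mulVec y) i) ^ 2 :=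
  stmt4_general n d hd J t ht0 C hC y
end

section
/- Let M be a real symmetric n×n matrix whose eigenvalues all lie in [0,1], and let 0 = t₀ < t₁ < ⋯ < t_J be natural numbers. Define Φ := M^(t_J) and Ψ_j := M^(t_j) − M^(t_{j+1}) for 0 ≤ j ≤ J−1. Then there is a constant C > 0, depending only on t₁ and t_J, such that for every x ∈ ℝⁿ, C‖x‖² ≤ ‖Φx‖² + Σ_{j=0}^{J-1} ‖Ψ_j x‖² ≤ ‖x‖². -/
/-!
Diagonalise `M = U diag(λ) Uᵀ` and put `y = Uᵀ x`. Each filter is a function of `M`, so the middle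
quantity is `∑ i, p(λ i) * y i ^ 2` with `p ξ = ξ ^ (2 t_J) + ∑ j, (ξ ^ t_j - ξ ^ t_{j+1}) ^ 2`,
while `‖x‖² = ‖y‖²`. The `J + 1` numbers `ξ ^ t_J` and `ξ ^ t_j - ξ ^ t_{j+1}` telescope to
`ξ ^ t_0 = 1`. By Cauchy–Schwarz the sum of their squares is at least `1 / (J + 1)`, and for
`ξ ∈ [0, 1]` they are nonnegative, so it is at most the square of their sum, `1`.
-/

open Matrix Finset

theorem one_div_succ_le_sq_add_sum_sq_sub (a : ℕ → ℝ) (J : ℕ) (h0 : a 0 = 1) :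
    1 / (J + 1 : ℝ) ≤ a J ^ 2 + ∑ j ∈ range J, (a j - a (j + 1)) ^ 2 := by
  obtain rfl | hJ := J.eq_zero_or_pos
  · simp [h0]
  have htel : ∑ j ∈ range J, (a j - a (j + 1)) = 1 - a J := by
    rw [sum_range_sub', h0]
  have hCS := sq_sum_le_card_mul_sum_sq (s := range J) (f := fun j => a j - a (j + 1))
  rw [htel, card_range] at hCS
  have hJ' : (0 : ℝ) < J := by exact_mod_cast hJ
  rw [div_le_iff₀ (by positivity), ← mul_le_mul_iff_of_pos_left hJ']
  nlinarith [sq_nonneg ((J + 1) * a J - 1)]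

theorem sq_add_sum_sq_sub_le_one (a : ℕ → ℝ) (J : ℕ) (h0 : a 0 = 1)
    (hanti : ∀ j < J, a (j + 1) ≤ a j) (hJ : 0 ≤ a J) :
    a J ^ 2 + ∑ j ∈ range J, (a j - a (j + 1)) ^ 2 ≤ 1 := by
  have hstep : ∀ j ∈ range J, 0 ≤ a j - a (j + 1) := fun j hj =>
    sub_nonneg.2 (hanti j (mem_range.1 hj))
  have htel : ∑ j ∈ range J, (a j - a (j + 1)) = 1 - a J := by
    rw [sum_range_sub', h0]
  have hsq := sum_sq_le_sq_sum_of_nonneg hstep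
  have hle : a J ≤ 1 := sub_nonneg.1 (htel ▸ sum_nonneg hstep)
  rw [htel] at hsq
  nlinarith

section Spectral

variable {ι : Type*} [Fintype ι] [DecidableEq ι]

theorem Matrix.sum_sq_mulVec_of_mem_unitaryGroup {U : Matrix ι ι ℝ}
    (hU : U ∈ unitaryGroup ι ℝ) (z : ι → ℝ) : ∑ i, (U *ᵥ z) i ^ 2 = ∑ i, z i ^ 2 := by
  have hsq (w : ι → ℝ) : ∑ i, w i ^ 2 = w ⬝ᵥ w := by simp [dotProduct, sq]
  rw [hsq, hsq, dotProduct_mulVec, ← mulVec_transpose, mulVec_mulVec,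
    ← conjTranspose_eq_transpose_of_trivial, ← star_eq_conjTranspose,
    (mem_unitaryGroup_iff').1 hU, one_mulVec]

theorem Matrix.IsHermitian.sum_sq_cfc_mulVec {A : Matrix ι ι ℝ} (hA : A.IsHermitian)
    (f : ℝ → ℝ) (x : ι → ℝ) :
    ∑ i, (cfc f A *ᵥ x) i ^ 2 =
      ∑ i, f (hA.eigenvalues i) ^ 2 *
        (star (hA.eigenvectorUnitary : Matrix ι ι ℝ) *ᵥ x) i ^ 2 := by
  rw [hA.cfc_eq, IsHermitian.cfc, Unitary.conjStarAlgAut_apply, ← mulVec_mulVec,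
    ← mulVec_mulVec, sum_sq_mulVec_of_mem_unitaryGroup hA.eigenvectorUnitary.2]
  simp only [mulVec_diagonal, Function.comp_apply, RCLike.ofReal_real_eq_id, id, mul_pow]

end Spectral

open Matrix in
theorem stmt5 (n : ℕ) (M : Matrix (Fin n) (Fin n) ℝ) (hsym : M.IsSymm)
    (hspec : spectrum ℝ M ⊆ Set.Icc (0 : ℝ) 1)
    (J : ℕ) (t : ℕ → ℕ) (ht0 : t 0 = 0) (hmono : ∀ j < J, t j < t (j + 1)) :
    ∃ C > 0, ∀ x : Fin n → ℝ,
      C * ∑ i, (x i) ^ 2 ≤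
        (∑ i, (((M ^ t J).mulVec x) i) ^ 2) +
          ∑ j ∈ Finset.range J, ∑ i, (((M ^ t j - M ^ t (j + 1)).mulVec x) i) ^ 2 ∧
      (∑ i, (((M ^ t J).mulVec x) i) ^ 2) +
          ∑ j ∈ Finset.range J, ∑ i, (((M ^ t j - M ^ t (j + 1)).mulVec x) i) ^ 2
        ≤ ∑ i, (x i) ^ 2 := by
  have hM : M.IsHermitian := isHermitian_iff_isSelfAdjoint.mpr hsym
  have hpow (k : ℕ) : M ^ k = cfc (fun ξ : ℝ => ξ ^ k) M :=
    (cfc_pow_id M k hM.isSelfAdjoint).symm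
  have hsub (a b : ℕ) : M ^ a - M ^ b = cfc (fun ξ : ℝ => ξ ^ a - ξ ^ b) M := by
    rw [cfc_sub (· ^ a) (· ^ b) M, ← hpow, ← hpow]
  have hev (i : Fin n) : hM.eigenvalues i ∈ Set.Icc (0 : ℝ) 1 :=
    hspec (hM.eigenvalues_mem_spectrum_real i)
  refine ⟨1 / (J + 1), by positivity, fun x => ?_⟩
  have hnorm := hM.sum_sq_cfc_mulVec 1 x
  rw [cfc_one ℝ M hM.isSelfAdjoint, one_mulVec] at hnorm
  simp only [hsub, hpow (t J), hM.sum_sq_cfc_mulVec, hnorm, Pi.one_apply, one_pow, one_mul]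
  rw [← sum_comm, ← sum_add_distrib, mul_sum]
  simp only [← sum_mul, ← add_mul]
  refine ⟨sum_le_sum fun i _ => ?_, sum_le_sum fun i _ => ?_⟩
  · gcongr
    exact one_div_succ_le_sq_add_sum_sq_sub (hM.eigenvalues i ^ t ·) J (by simp [ht0])
  · refine mul_le_of_le_one_left (sq_nonneg _) ?_
    exact sq_add_sum_sq_sub_le_one (hM.eigenvalues i ^ t ·) J (by simp [ht0])
      (fun j hj => pow_le_pow_of_le_one (hev i).1 (hev i).2 (hmono j hj).le)
      (pow_nonneg (hev i).1 _)
end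

section
/- Let P be an n×n real matrix such that M := D^(−1/2) P D^(1/2) is symmetric with eigenvalues in [0,1], where D is a diagonal matrix with positive diagonal entries. Define the weighted norm ‖x‖_{D^{−1/2}} := ‖D^{−1/2} x‖₂ on ℝⁿ. Given natural numbers 0 = t₀ < t₁ < ⋯ < t_J, set Φ'_J := P^(t_J) and Ψ'_j := P^(t_j) − P^(t_{j+1}) for 0 ≤ j ≤ J−1. Then there exists C > 0 depending only on t₁, t_J such that for every x ∈ ℝⁿ, C‖x‖²_{D^{−1/2}} ≤ ‖Φ'_J x‖²_{D^{−1/2}} + Σ_{j=0}^{J-1} ‖Ψ'_j x‖²_{D^{−1/2}} ≤ ‖x‖²_{D^{−1/2}}. -/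
/-!
Conjugation by `D^{1/2}` turns `P` into the symmetric matrix `M` and the weighted norm of `x` into
the Euclidean norm of `y = D^{-1/2} x`. In an orthonormal eigenbasis of `M`, with coordinates `zₖ`
of `y`, the frame energy of `y` is `∑ₖ g(λₖ) zₖ²` for the Littlewood–Paley sum
`g(μ) = μ^{2 t_J} + ∑ⱼ (μ^{t_j} - μ^{t_{j+1}})²`. On `[0, 1]` this sum telescopes to at most `1`;
and since `μ^{t_J} ≥ 1 - t_J (1 - μ)` (Bernoulli) while the `j = 0` term is at least `(1 - μ)²`,
it is at least `1 / (2 t_J²)`.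
-/

open Matrix Finset

def littlewoodPaleySum (t : ℕ → ℕ) (J : ℕ) (μ : ℝ) : ℝ :=
  (μ ^ t J) ^ 2 + ∑ j ∈ range J, (μ ^ t j - μ ^ t (j + 1)) ^ 2

section Scalar

variable {t : ℕ → ℕ} {J : ℕ} {μ : ℝ}

theorem littlewoodPaleySum_le_one (ht0 : t 0 = 0) (hmono : ∀ j < J, t j ≤ t (j + 1))
    (h0 : 0 ≤ μ) (h1 : μ ≤ 1) : littlewoodPaleySum t J μ ≤ 1 := by
  have hterm : ∀ j ∈ range J,
      (μ ^ t j - μ ^ t (j + 1)) ^ 2 ≤ (μ ^ t j) ^ 2 - (μ ^ t (j + 1)) ^ 2 := by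
    intro j hj
    have hle : μ ^ t (j + 1) ≤ μ ^ t j :=
      pow_le_pow_of_le_one h0 h1 (hmono j (mem_range.mp hj))
    nlinarith [pow_nonneg h0 (t (j + 1))]
  have htel := sum_le_sum hterm
  rw [sum_range_sub' (fun j => (μ ^ t j) ^ 2), ht0, pow_zero, one_pow] at htel
  unfold littlewoodPaleySum
  linarith

theorem inv_two_mul_sq_le_littlewoodPaleySum (hJ : 0 < J) (ht0 : t 0 = 0) (ht1 : t 1 ≠ 0)
    (htJ : 0 < t J) (h0 : 0 ≤ μ) (h1 : μ ≤ 1) :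
    1 / (2 * (t J : ℝ) ^ 2) ≤ littlewoodPaleySum t J μ := by
  set T : ℝ := (t J : ℝ)
  have hT : 1 ≤ T := Nat.one_le_cast.mpr htJ
  have hbernoulli : 1 ≤ μ ^ t J + T * (1 - μ) := by
    have := one_add_mul_le_pow (show -2 ≤ μ - 1 by linarith) (t J)
    rw [add_sub_cancel] at this
    linarith
  have hfirst : (1 - μ) ^ 2 ≤ ∑ j ∈ range J, (μ ^ t j - μ ^ t (j + 1)) ^ 2 := by
    have hμ1 : μ ^ t 1 ≤ μ := pow_le_of_le_one h0 h1 ht1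
    have := single_le_sum (f := fun j => (μ ^ t j - μ ^ t (j + 1)) ^ 2)
      (fun j _ => sq_nonneg _) (mem_range.mpr hJ)
    simp only [ht0, pow_zero, zero_add] at this
    nlinarith
  rw [div_le_iff₀ (by positivity)]
  calc (1 : ℝ) ≤ (μ ^ t J + T * (1 - μ)) ^ 2 := by nlinarith
    _ ≤ 2 * ((μ ^ t J) ^ 2 + T ^ 2 * (1 - μ) ^ 2) := by
      nlinarith [sq_nonneg (μ ^ t J - T * (1 - μ))]
    _ ≤ ((μ ^ t J) ^ 2 + (1 - μ) ^ 2) * (2 * T ^ 2) := by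
      have hT2 : 1 ≤ T ^ 2 := one_le_pow₀ hT
      nlinarith [mul_le_mul_of_nonneg_right hT2 (sq_nonneg (μ ^ t J))]
    _ ≤ littlewoodPaleySum t J μ * (2 * T ^ 2) := by unfold littlewoodPaleySum; gcongr

end Scalar

namespace Matrix

variable {n : Type*} [Fintype n] [DecidableEq n]

theorem sum_sq_mulVec_of_star_mul_self {U : Matrix n n ℝ} (hU : star U * U = 1) (w : n → ℝ) :
    ∑ i, (U *ᵥ w) i ^ 2 = ∑ i, w i ^ 2 := by
  have hdot : ∀ v : n → ℝ, ∑ i, v i ^ 2 = v ⬝ᵥ v := fun v => by simp [dotProduct, sq]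
  rw [hdot, hdot, dotProduct_mulVec, ← mulVec_transpose, mulVec_mulVec,
    ← conjTranspose_eq_transpose_of_trivial, ← star_eq_conjTranspose, hU, one_mulVec]

theorem IsHermitian.sum_sq_cfc_mulVec_s6 {A : Matrix n n ℝ} (hA : A.IsHermitian) (f : ℝ → ℝ)
    (y : n → ℝ) :
    ∑ i, (cfc f A *ᵥ y) i ^ 2 =
      ∑ k, f (hA.eigenvalues k) ^ 2 * (star (hA.eigenvectorUnitary : Matrix n n ℝ) *ᵥ y) k ^ 2 := by
  rw [hA.cfc_eq, IsHermitian.cfc, Unitary.conjStarAlgAut_apply, ← mulVec_mulVec, ← mulVec_mulVec,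
    sum_sq_mulVec_of_star_mul_self (Unitary.coe_star_mul_self _)]
  simp [mulVec_diagonal, mul_pow]

theorem IsHermitian.sum_sq_star_eigenvectorUnitary_mulVec {A : Matrix n n ℝ} (hA : A.IsHermitian)
    (y : n → ℝ) :
    ∑ k, (star (hA.eigenvectorUnitary : Matrix n n ℝ) *ᵥ y) k ^ 2 = ∑ i, y i ^ 2 :=
  sum_sq_mulVec_of_star_mul_self (by simp) y

theorem IsHermitian.sum_sq_pow_mulVec_add_sum_sq_pow_sub_pow_mulVec {A : Matrix n n ℝ}
    (hA : A.IsHermitian) (t : ℕ → ℕ) (J : ℕ) (y : n → ℝ) :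
    ∑ i, (A ^ t J *ᵥ y) i ^ 2 + ∑ j ∈ range J, ∑ i, ((A ^ t j - A ^ t (j + 1)) *ᵥ y) i ^ 2 =
      ∑ k, littlewoodPaleySum t J (hA.eigenvalues k) *
        (star (hA.eigenvectorUnitary : Matrix n n ℝ) *ᵥ y) k ^ 2 := by
  have hpow (m : ℕ) : A ^ m = cfc (· ^ m : ℝ → ℝ) A := (cfc_pow_id A m hA).symm
  have hsub (a b : ℕ) : A ^ a - A ^ b = cfc (fun μ : ℝ => μ ^ a - μ ^ b) A := by
    rw [cfc_sub _ _ A, hpow, hpow]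
  simp_rw [hsub, hpow, hA.sum_sq_cfc_mulVec_s6]
  rw [sum_comm, ← sum_add_distrib]
  simp only [littlewoodPaleySum, add_mul, sum_mul]

end Matrix

section Weighted

variable {n : Type*} [Fintype n] [DecidableEq n] {d : n → ℝ}

theorem sum_sq_div_eq_sum_sq_diagonal_inv_sqrt_mulVec (hd : ∀ i, 0 < d i) (v : n → ℝ) :
    ∑ i, v i ^ 2 / d i = ∑ i, (diagonal (fun i => (√(d i))⁻¹) *ᵥ v) i ^ 2 := by
  refine sum_congr rfl fun i _ => ?_
  rw [mulVec_diagonal, mul_pow, inv_pow, Real.sq_sqrt (hd i).le, inv_mul_eq_div]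

theorem sum_sq_mulVec_div_eq_of_semiconjBy (hd : ∀ i, 0 < d i) {B B' : Matrix n n ℝ}
    (h : SemiconjBy (diagonal fun i => (√(d i))⁻¹) B B') (x : n → ℝ) :
    ∑ i, (B *ᵥ x) i ^ 2 / d i = ∑ i, (B' *ᵥ (diagonal (fun i => (√(d i))⁻¹) *ᵥ x)) i ^ 2 := by
  rw [sum_sq_div_eq_sum_sq_diagonal_inv_sqrt_mulVec hd, mulVec_mulVec, h.eq, mulVec_mulVec]

theorem semiconjBy_diagonal_inv_sqrt (hd : ∀ i, 0 < d i) (P : Matrix n n ℝ) :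
    SemiconjBy (diagonal fun i => (√(d i))⁻¹) P
      (diagonal (fun i => (√(d i))⁻¹) * P * diagonal fun i => √(d i)) := by
  have hinv : (diagonal fun i => √(d i)) * (diagonal fun i => (√(d i))⁻¹) = 1 := by
    rw [diagonal_mul_diagonal, ← diagonal_one]
    exact congrArg diagonal (funext fun i => mul_inv_cancel₀ (Real.sqrt_pos.2 (hd i)).ne')
  rw [SemiconjBy, mul_assoc _ (diagonal _), hinv, mul_one]

end Weighted

open Matrix in
theorem stmt6 (n : ℕ) (d : Fin n → ℝ) (hd : ∀ i, 0 < d i)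
    (P : Matrix (Fin n) (Fin n) ℝ)
    (M : Matrix (Fin n) (Fin n) ℝ)
    (hM : M = Matrix.diagonal (fun i => (Real.sqrt (d i))⁻¹) * P *
              Matrix.diagonal (fun i => Real.sqrt (d i)))
    (hsym : M.IsSymm) (hspec : spectrum ℝ M ⊆ Set.Icc (0 : ℝ) 1)
    (J : ℕ) (t : ℕ → ℕ) (ht0 : t 0 = 0) (hmono : ∀ j < J, t j < t (j + 1)) :
    ∃ C > 0, ∀ x : Fin n → ℝ,
      C * ∑ i, (x i) ^ 2 / d i ≤
        (∑ i, (((P ^ t J).mulVec x) i) ^ 2 / d i) +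
          ∑ j ∈ Finset.range J, ∑ i, (((P ^ t j - P ^ t (j + 1)).mulVec x) i) ^ 2 / d i ∧
      (∑ i, (((P ^ t J).mulVec x) i) ^ 2 / d i) +
          ∑ j ∈ Finset.range J, ∑ i, (((P ^ t j - P ^ t (j + 1)).mulVec x) i) ^ 2 / d i
        ≤ ∑ i, (x i) ^ 2 / d i := by
  obtain rfl | hJ := J.eq_zero_or_pos
  · exact ⟨1, one_pos, fun x => by simp [ht0]⟩
  have hA : M.IsHermitian := hsym
  have ht : StrictMonoOn t (Set.Iic J) := strictMonoOn_Iic_of_lt_succ hmono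
  have ht1 : t 1 ≠ 0 := (ht0 ▸ ht (by simp) (by simpa) one_pos).ne'
  have htJ : 0 < t J := ht0 ▸ ht (by simp) (by simp) hJ
  have heig (k : Fin n) : hA.eigenvalues k ∈ Set.Icc 0 1 :=
    hspec (hA.eigenvalues_mem_spectrum_real k)
  have hP := hM ▸ semiconjBy_diagonal_inv_sqrt hd P
  refine ⟨1 / (2 * t J ^ 2), by positivity, fun x => ?_⟩
  simp only [sum_sq_mulVec_div_eq_of_semiconjBy hd (hP.pow_right _),
    sum_sq_mulVec_div_eq_of_semiconjBy hd ((hP.pow_right _).sub_right (hP.pow_right _)),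
    sum_sq_div_eq_sum_sq_diagonal_inv_sqrt_mulVec hd x]
  rw [hA.sum_sq_pow_mulVec_add_sum_sq_pow_sub_pow_mulVec,
    ← hA.sum_sq_star_eigenvectorUnitary_mulVec (diagonal (fun i => (√(d i))⁻¹) *ᵥ x)]
  constructor
  · rw [mul_sum]
    gcongr with k
    exact inv_two_mul_sq_le_littlewoodPaleySum hJ ht0 ht1 htJ (heig k).1 (heig k).2
  · apply sum_le_sum fun k _ => ?_
    apply mul_le_of_le_one_left (sq_nonneg _)
    exact littlewoodPaleySum_le_one ht0 (fun j hj => (hmono j hj).le) (heig k).1 (heig k).2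
end

section
/- Let P be an n×n real matrix, let 0 = t₀ < t₁ < ⋯ < t_J be natural numbers, and define Ψ_j := P^(t_j) − P^(t_{j+1}) (with Ψ₀ := I − P^(t₁)). For a path p = (j₁, …, j_m) define U_p x := Ψ_{j_m} |Ψ_{j_{m−1}} ⋯ |Ψ_{j₂} |Ψ_{j₁} x|| ⋯ |, where |·| is entrywise absolute value. Let Π be a permutation matrix and define the permuted operators Ψ̄_j := Π Ψ_j Πᵀ and Ū_p correspondingly. Then Ū_p (Πx) = Π (U_p x) for all x ∈ ℝⁿ. -/
/-!
A permutation matrix `Π` intertwines every filter (`Ψ̄_j Π = Π Ψ_j`, since `Πᵀ Π = 1`) and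
commutes with the entrywise modulus, so it can be pushed through `U_p` one layer at a time.
-/

/-- The scattering propagator `U_p x = Ψ_{j_m} |Ψ_{j_{m-1}} ⋯ |Ψ_{j_1} x| ⋯ |`
for a path `p = [j₁, …, j_m]` of filter indices. -/
def scatU {n : ℕ} (Ψ : ℕ → Matrix (Fin n) (Fin n) ℝ) :
    List ℕ → (Fin n → ℝ) → (Fin n → ℝ)
  | [], x => x
  | [j], x => (Ψ j).mulVec x
  | j :: p, x => scatU Ψ p (fun i => |(Ψ j).mulVec x i|)

namespace Matrix

variable {ι R : Type*} [Fintype ι] [DecidableEq ι]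

lemma transpose_permMatrix_mul_permMatrix [NonAssocSemiring R] (σ : Equiv.Perm ι) :
    (σ.permMatrix R)ᵀ * σ.permMatrix R = 1 := by
  rw [transpose_permMatrix, ← permMatrix_mul, mul_inv_cancel, permMatrix_one]

lemma abs_permMatrix_mulVec [CommRing R] [LinearOrder R] [IsOrderedRing R]
    (σ : Equiv.Perm ι) (v : ι → R) :
    |σ.permMatrix R *ᵥ v| = σ.permMatrix R *ᵥ |v| := by
  ext i
  simp [permMatrix_mulVec]

end Matrix

open Matrix in
theorem scatU_mulVec_of_intertwines {n : ℕ} {Ψ Ψ' : ℕ → Matrix (Fin n) (Fin n) ℝ}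
    {Q : Matrix (Fin n) (Fin n) ℝ} (hΨ : ∀ j, Ψ' j * Q = Q * Ψ j)
    (hQ : ∀ y : Fin n → ℝ, |Q *ᵥ y| = Q *ᵥ |y|) (p : List ℕ) (x : Fin n → ℝ) :
    scatU Ψ' p (Q *ᵥ x) = Q *ᵥ scatU Ψ p x := by
  have hfilter (j : ℕ) (y : Fin n → ℝ) : Ψ' j *ᵥ Q *ᵥ y = Q *ᵥ Ψ j *ᵥ y := by
    rw [mulVec_mulVec, mulVec_mulVec, hΨ]
  fun_induction scatU Ψ p x with
  | case1 x => rfl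
  | case2 j x => exact hfilter j x
  | case3 j p x hp ih =>
    rw [scatU.eq_3 _ _ _ _ hp, hfilter, ← Pi.abs_def, hQ]
    exact ih

open Matrix in
theorem stmt9_general (n : ℕ) (Ψ : ℕ → Matrix (Fin n) (Fin n) ℝ)
    (σ : Equiv.Perm (Fin n))
    (Pi : Matrix (Fin n) (Fin n) ℝ) (hPi : Pi = σ.permMatrix ℝ)
    (Ψbar : ℕ → Matrix (Fin n) (Fin n) ℝ)
    (hΨbar : ∀ j, Ψbar j = Pi * Ψ j * Pi.transpose)
    (p : List ℕ) (x : Fin n → ℝ) :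
    scatU Ψbar p (Pi.mulVec x) = Pi.mulVec (scatU Ψ p x) := by
  subst hPi
  refine scatU_mulVec_of_intertwines (fun j => ?_) (abs_permMatrix_mulVec σ) p x
  rw [hΨbar, Matrix.mul_assoc, transpose_permMatrix_mul_permMatrix, Matrix.mul_one]

open Matrix in
theorem stmt9 (n : ℕ) (P : Matrix (Fin n) (Fin n) ℝ)
    (J : ℕ) (t : ℕ → ℕ) (ht0 : t 0 = 0) (hmono : ∀ j < J, t j < t (j + 1))
    (Ψ : ℕ → Matrix (Fin n) (Fin n) ℝ) (hΨ : ∀ j, Ψ j = P ^ t j - P ^ t (j + 1))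
    (σ : Equiv.Perm (Fin n))
    (Pi : Matrix (Fin n) (Fin n) ℝ) (hPi : Pi = σ.permMatrix ℝ)
    (Ψbar : ℕ → Matrix (Fin n) (Fin n) ℝ)
    (hΨbar : ∀ j, Ψbar j = Pi * Ψ j * Pi.transpose)
    (p : List ℕ) (x : Fin n → ℝ) :
    scatU Ψbar p (Pi.mulVec x) = Pi.mulVec (scatU Ψ p x) :=
  stmt9_general n Ψ σ Pi hPi Ψbar hΨbar p x
end

section
/- With the setup of the scattering transform U_p built from wavelets Ψ_j := P^(t_j) − P^(t_{j+1}) and a permutation matrix Π with permuted operators Ū_p, define the scattering moments S_{p,q} x := Σ_{i=1}^n |U_p x [i]|^q for q ∈ ℕ. Then S̄_{p,q}(Πx) = S_{p,q} x for all x ∈ ℝⁿ, all paths p, and all q ≥ 1. -/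
/-- The scattering moment `S_{p,q} x = ∑ᵢ |U_p x [i]|^q`. -/
def scatS {n : ℕ} (Ψ : ℕ → Matrix (Fin n) (Fin n) ℝ) (p : List ℕ) (q : ℕ)
    (x : Fin n → ℝ) : ℝ :=
  ∑ i, |scatU Ψ p x i| ^ q

/-! `Π = σ.permMatrix` acts on signals as `x ↦ x ∘ σ`. Each layer of `U_p` is a filter followed
by the entrywise absolute value; the filters `Π Ψ_j Πᵀ` intertwine the relabelling and the
absolute value commutes with it, so `Ū_p (Π x) = Π (U_p x)`. A moment sums a function of the
entries, which is invariant under reordering them. -/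

section

open Matrix

lemma permMatrix_conj_mulVec_comp {ι R : Type*} [Fintype ι] [DecidableEq ι] [CommRing R]
    (σ : Equiv.Perm ι) (A : Matrix ι ι R) (x : ι → R) :
    (σ.permMatrix R * A * (σ.permMatrix R)ᵀ) *ᵥ (x ∘ σ) = (A *ᵥ x) ∘ σ := by
  have h_inv : (σ.permMatrix R)ᵀ *ᵥ (x ∘ σ) = x := by
    rw [transpose_permMatrix, permMatrix_mulVec, Function.comp_assoc, Equiv.Perm.coe_inv,
      Equiv.self_comp_symm, Function.comp_id]
  rw [← mulVec_mulVec, ← mulVec_mulVec, h_inv, permMatrix_mulVec]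

lemma scatU_comp_perm {n : ℕ} (σ : Equiv.Perm (Fin n)) (Ψ Ψbar : ℕ → Matrix (Fin n) (Fin n) ℝ)
    (hΨbar : ∀ j x, Ψbar j *ᵥ (x ∘ σ) = (Ψ j *ᵥ x) ∘ σ) (p : List ℕ) (x : Fin n → ℝ) :
    scatU Ψbar p (x ∘ σ) = scatU Ψ p x ∘ σ := by
  induction p generalizing x with
  | nil => rfl
  | cons j p ih =>
    cases p with
    | nil => exact hΨbar j x
    | cons k p =>
      have h_layer : (fun i => |(Ψbar j *ᵥ (x ∘ σ)) i|) = (fun i => |(Ψ j *ᵥ x) i|) ∘ σ := by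
        rw [hΨbar]
        rfl
      simp only [scatU, h_layer, ih]

lemma scatS_comp_perm {n : ℕ} (σ : Equiv.Perm (Fin n)) (Ψ Ψbar : ℕ → Matrix (Fin n) (Fin n) ℝ)
    (hΨbar : ∀ j x, Ψbar j *ᵥ (x ∘ σ) = (Ψ j *ᵥ x) ∘ σ) (p : List ℕ) (q : ℕ) (x : Fin n → ℝ) :
    scatS Ψbar p q (x ∘ σ) = scatS Ψ p q x := by
  rw [scatS, scatU_comp_perm σ Ψ Ψbar hΨbar]
  exact Equiv.sum_comp σ (fun i => |scatU Ψ p x i| ^ q)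

end

open Matrix in
theorem stmt10_general (n : ℕ)
    (Ψ : ℕ → Matrix (Fin n) (Fin n) ℝ)
    (σ : Equiv.Perm (Fin n))
    (Pi : Matrix (Fin n) (Fin n) ℝ) (hPi : Pi = σ.permMatrix ℝ)
    (Ψbar : ℕ → Matrix (Fin n) (Fin n) ℝ)
    (hΨbar : ∀ j, Ψbar j = Pi * Ψ j * Pi.transpose)
    (p : List ℕ) (q : ℕ) (x : Fin n → ℝ) :
    scatS Ψbar p q (Pi.mulVec x) = scatS Ψ p q x := by
  subst hPi
  rw [permMatrix_mulVec]
  refine scatS_comp_perm σ Ψ Ψbar (fun j y => ?_) p q x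
  rw [hΨbar, permMatrix_conj_mulVec_comp]

open Matrix in
theorem stmt10 (n : ℕ) (P : Matrix (Fin n) (Fin n) ℝ)
    (J : ℕ) (t : ℕ → ℕ) (ht0 : t 0 = 0) (hmono : ∀ j < J, t j < t (j + 1))
    (Ψ : ℕ → Matrix (Fin n) (Fin n) ℝ) (hΨ : ∀ j, Ψ j = P ^ t j - P ^ t (j + 1))
    (σ : Equiv.Perm (Fin n))
    (Pi : Matrix (Fin n) (Fin n) ℝ) (hPi : Pi = σ.permMatrix ℝ)
    (Ψbar : ℕ → Matrix (Fin n) (Fin n) ℝ)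
    (hΨbar : ∀ j, Ψbar j = Pi * Ψ j * Pi.transpose)
    (p : List ℕ) (q : ℕ) (hq : 1 ≤ q) (x : Fin n → ℝ) :
    scatS Ψbar p q (Pi.mulVec x) = scatS Ψ p q x :=
  stmt10_general n Ψ σ Pi hPi Ψbar hΨbar p q x
end

section
/- Let M = QΛQᵀ with Q orthogonal and Λ diagonal with entries in [0,1], and let 0 = t₀ < t₁ < ⋯ < t_J. Then the operator T x := (M^(t_J)x, (M^(t₀) − M^(t₁))x, …, (M^(t_{J−1}) − M^(t_J))x) from ℝⁿ to (ℝⁿ)^(J+1) is injective and nonexpansive with respect to the Euclidean norms (where the norm on the codomain is the square root of the sum of squared norms of components). -/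
/-!
In the eigenbasis `y = Qᵀ x` of `M`, each component of `T x` has squared norm `∑ᵢ c(λᵢ)² yᵢ²`,
where the scalar filters `ξ ^ t_J` and `ξ ^ t_j - ξ ^ t_{j+1}` are nonnegative on `[0, 1]` and
telescope to `ξ ^ t₀ = 1`. Nonnegative reals summing to `1` have squares summing to at most `1`,
which gives nonexpansiveness. The same telescoping applied to the matrices shows that the
components of `T x` sum to `x`, so `T` has a left inverse.
-/

open Matrix Finset

lemma sq_add_sum_sq_sub_succ_le {a : ℕ → ℝ} {J : ℕ} (hanti : ∀ j < J, a (j + 1) ≤ a j)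
    (hJ : 0 ≤ a J) :
    a J ^ 2 + ∑ j ∈ range J, (a j - a (j + 1)) ^ 2 ≤ a 0 ^ 2 := by
  have hdiff : ∀ j ∈ range J, 0 ≤ a j - a (j + 1) :=
    fun j hj => sub_nonneg.mpr (hanti j (mem_range.mp hj))
  have htel : ∑ j ∈ range J, (a j - a (j + 1)) = a 0 - a J := sum_range_sub' a J
  have hsq := sum_sq_le_sq_sum_of_nonneg hdiff
  have hJ0 : 0 ≤ a 0 - a J := htel ▸ sum_nonneg hdiff
  rw [htel] at hsq
  nlinarith

lemma sq_pow_add_sum_sq_pow_sub_le_one {ξ : ℝ} (h0 : 0 ≤ ξ) (h1 : ξ ≤ 1) {J : ℕ}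
    {t : ℕ → ℕ} (ht0 : t 0 = 0) (hmono : ∀ j < J, t j < t (j + 1)) :
    (ξ ^ t J) ^ 2 + ∑ j : Fin J, (ξ ^ t j - ξ ^ t (j + 1)) ^ 2 ≤ 1 := by
  rw [Fin.sum_univ_eq_sum_range (fun j => (ξ ^ t j - ξ ^ t (j + 1)) ^ 2)]
  simpa [ht0] using sq_add_sum_sq_sub_succ_le (a := fun j => ξ ^ t j)
    (fun j hj => pow_le_pow_of_le_one h0 h1 (hmono j hj).le) (pow_nonneg h0 _)

lemma sum_fin_cons_pow_sub_mulVec {R n : Type*} [CommRing R] [Fintype n] [DecidableEq n]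
    (M : Matrix n n R) {J : ℕ} {t : ℕ → ℕ} (ht0 : t 0 = 0) (x : n → R) :
    ∑ j, (Fin.cons ((M ^ t J) *ᵥ x)
      (fun j : Fin J => (M ^ t j - M ^ t (j + 1)) *ᵥ x) : Fin (J + 1) → n → R) j = x := by
  rw [Fin.sum_cons, Fin.sum_univ_eq_sum_range (fun j => (M ^ t j - M ^ t (j + 1)) *ᵥ x)]
  simp only [sub_mulVec]
  rw [sum_range_sub' (fun j => M ^ t j *ᵥ x), ht0, pow_zero, one_mulVec]
  abel

section Orthogonal

variable {n R : Type*} [Fintype n] [DecidableEq n] [CommRing R]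

lemma sum_sq_mulVec_of_transpose_mul_self {Q : Matrix n n R} (hQ : Qᵀ * Q = 1) (w : n → R) :
    ∑ i, (Q *ᵥ w) i ^ 2 = ∑ i, w i ^ 2 := by
  have h : (Q *ᵥ w) ⬝ᵥ (Q *ᵥ w) = w ⬝ᵥ w := by
    rw [dotProduct_mulVec, ← mulVec_transpose, mulVec_mulVec, hQ, one_mulVec]
  simpa [dotProduct, sq] using h

lemma sum_sq_conj_diagonal_mulVec {Q : Matrix n n R} (hQ : Qᵀ * Q = 1) (d x : n → R) :
    ∑ i, ((Q * diagonal d * Qᵀ) *ᵥ x) i ^ 2 = ∑ i, d i ^ 2 * (Qᵀ *ᵥ x) i ^ 2 := by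
  rw [← mulVec_mulVec, ← mulVec_mulVec, sum_sq_mulVec_of_transpose_mul_self hQ]
  simp only [mulVec_diagonal, mul_pow]

lemma conj_diagonal_pow {Q : Matrix n n R} (hQQt : Q * Qᵀ = 1) (hQtQ : Qᵀ * Q = 1)
    (d : n → R) (k : ℕ) :
    (Q * diagonal d * Qᵀ) ^ k = Q * diagonal (d ^ k) * Qᵀ := by
  simpa [← diagonal_pow] using Units.conj_pow ⟨Q, Qᵀ, hQQt, hQtQ⟩ (diagonal d) k

end Orthogonal

open Matrix in
theorem stmt15 (n : ℕ) (Q : Matrix (Fin n) (Fin n) ℝ)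
    (hQ : Q ∈ Matrix.orthogonalGroup (Fin n) ℝ)
    (lam : Fin n → ℝ) (hlam : ∀ i, lam i ∈ Set.Icc (0 : ℝ) 1)
    (M : Matrix (Fin n) (Fin n) ℝ) (hM : M = Q * Matrix.diagonal lam * Q.transpose)
    (J : ℕ) (t : ℕ → ℕ) (ht0 : t 0 = 0) (hmono : ∀ j < J, t j < t (j + 1))
    (T : (Fin n → ℝ) → Fin (J + 1) → Fin n → ℝ)
    (hT : ∀ x, T x = Fin.cons ((M ^ t J).mulVec x)
        (fun j : Fin J => (M ^ t (j : ℕ) - M ^ t ((j : ℕ) + 1)).mulVec x)) :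
    Function.Injective T ∧
    ∀ x : Fin n → ℝ, ∑ j, ∑ i, (T x j i) ^ 2 ≤ ∑ i, (x i) ^ 2 := by
  have hQtQ : Qᵀ * Q = 1 := by
    simpa [star_eq_conjTranspose] using (mem_orthogonalGroup_iff' _ _).mp hQ
  have hQQt : Q * Qᵀ = 1 := by
    simpa [star_eq_conjTranspose] using (mem_orthogonalGroup_iff _ _).mp hQ
  have hpow : ∀ k, M ^ k = Q * diagonal (lam ^ k) * Qᵀ :=
    fun k => hM ▸ conj_diagonal_pow hQQt hQtQ lam k
  have hsub : ∀ a b, M ^ a - M ^ b = Q * diagonal (lam ^ a - lam ^ b) * Qᵀ := by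
    intro a b
    rw [hpow, hpow, ← sub_mul, ← mul_sub, diagonal_sub]
    rfl
  refine ⟨Function.LeftInverse.injective (g := fun y => ∑ j, y j) fun x => ?_, fun x => ?_⟩
  · rw [hT]
    exact sum_fin_cons_pow_sub_mulVec M ht0 x
  calc ∑ j, ∑ i, T x j i ^ 2
      = ∑ i, ((lam i ^ t J) ^ 2 + ∑ j : Fin J, (lam i ^ t j - lam i ^ t (j + 1)) ^ 2) *
          (Qᵀ *ᵥ x) i ^ 2 := by
        simp only [hT, Fin.sum_univ_succ, Fin.cons_zero, Fin.cons_succ, hsub]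
        simp only [hpow, sum_sq_conj_diagonal_mulVec hQtQ, Pi.pow_apply, Pi.sub_apply]
        rw [sum_comm, ← sum_add_distrib]
        simp only [add_mul, sum_mul]
    _ ≤ ∑ i, (Qᵀ *ᵥ x) i ^ 2 := sum_le_sum fun i _ => mul_le_of_le_one_left (sq_nonneg _)
        (sq_pow_add_sum_sq_pow_sub_le_one (hlam i).1 (hlam i).2 ht0 hmono)
    _ = ∑ i, x i ^ 2 := sum_sq_mulVec_of_transpose_mul_self (by rwa [transpose_transpose]) x
end
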